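/- Let ν, ν' ∈ ℝ⁴ be unit vectors and set a₁ = ⟪ν', ν⟫, a₂ = ⟪i·ν', ν⟫, a₃ = ⟪j·ν', ν⟫, a₄ = ⟪k·ν', ν⟫. Assume a₂ > 0. Define the 2×2 matrix ψ = (1/a₂)·[[a₁a₂ − a₃a₄, −(a₂² + a₄²)], [a₂² + a₃², a₁a₂ + a₃a₄]]. Then: (i) for every V ∈ ℝ⁴ orthogonal to both ν and ν', one has (⟪V, j·ν⟫, ⟪V, k·ν⟫) = ψ·(⟪V, j·ν'⟫, ⟪V, k·ν'⟫); (ii) det ψ = 1; (iii) Tr ψ = 2a₁ and −2 < Tr ψ < 2; and (iv) ψ is positive elliptic, i.e. for every v ∈ ℝ² \ {0}, the determinant of the 2×2 matrix with columns v and ψ·v is positive. (Lemma 2.18 of the paper: the transition matrix ψ_F = τ_F ∘ (τ'_F)⁻¹ of a 2-face is positive elliptic.) -/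

import Mathlib

open RealInnerProductSpace

/-- The standard complex structure on ℝ⁴:
`i(x₁,x₂,y₁,y₂) = (−y₁,−y₂,x₁,x₂)`. -/
def Imap (v : EuclideanSpace ℝ (Fin 4)) : EuclideanSpace ℝ (Fin 4) :=
  WithLp.toLp 2 ![-(v 2), -(v 3), v 0, v 1]

/-- The quaternion `j` acting on ℝ⁴: `j(x₁,x₂,y₁,y₂) = (−x₂,x₁,y₂,−y₁)`. -/
def Jmap (v : EuclideanSpace ℝ (Fin 4)) : EuclideanSpace ℝ (Fin 4) :=
  WithLp.toLp 2 ![-(v 1), v 0, v 3, -(v 2)]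

/-- The quaternion `k` acting on ℝ⁴: `k(x₁,x₂,y₁,y₂) = (−y₂,y₁,−x₂,x₁)`. -/
def Kmap (v : EuclideanSpace ℝ (Fin 4)) : EuclideanSpace ℝ (Fin 4) :=
  WithLp.toLp 2 ![-(v 3), v 2, -(v 1), v 0]


/-!
Since `i, j, k` are orthogonal, skew-adjoint and satisfy the quaternion relations, for a unit
vector `ν'` the vectors `ν', iν', jν', kν'` form an orthonormal frame of ℝ⁴, in which `ν` has
coordinates `(a₁, a₂, a₃, a₄)`. So `∑ aₖ² = 1`, which gives `det ψ = 1` and `|a₁| < 1`. Applying `j`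
and `k` to this expansion of `ν` and using the quaternion relations expresses `⟪V, jν⟫, ⟪V, kν⟫`
through `⟪V, iν'⟫, ⟪V, jν'⟫, ⟪V, kν'⟫` when `V ⊥ ν'`; the condition `V ⊥ ν` then eliminates
`⟪V, iν'⟫` since `a₂ ≠ 0`. Finally `det [v, ψ v] = (a₂² ‖v‖² + (a₃ v₀ + a₄ v₁)²) / a₂ > 0`.
-/

open Matrix

section QuaternionFrame

variable (u w V : EuclideanSpace ℝ (Fin 4))

/- Expansions of `w`, `j w`, `k w` in the orthogonal frame `u, iu, ju, ku` (all of length `‖u‖`);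
the signs come from `ji = -k`, `jk = i`, `ki = j`, `kj = -i`. -/

theorem norm_sq_mul_inner_eq :
    ‖u‖ ^ 2 * ⟪V, w⟫ = ⟪u, w⟫ * ⟪V, u⟫ + ⟪Imap u, w⟫ * ⟪V, Imap u⟫ +
      ⟪Jmap u, w⟫ * ⟪V, Jmap u⟫ + ⟪Kmap u, w⟫ * ⟪V, Kmap u⟫ := by
  simp only [EuclideanSpace.norm_sq_eq, Real.norm_eq_abs, sq_abs, PiLp.inner_apply,
    RCLike.inner_apply, Real.ringHom_apply, Fin.sum_univ_four, Imap, Jmap, Kmap,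
    cons_val_zero, cons_val_one, cons_val]
  ring

theorem norm_sq_mul_inner_Jmap_eq :
    ‖u‖ ^ 2 * ⟪V, Jmap w⟫ = ⟪u, w⟫ * ⟪V, Jmap u⟫ - ⟪Imap u, w⟫ * ⟪V, Kmap u⟫ -
      ⟪Jmap u, w⟫ * ⟪V, u⟫ + ⟪Kmap u, w⟫ * ⟪V, Imap u⟫ := by
  simp only [EuclideanSpace.norm_sq_eq, Real.norm_eq_abs, sq_abs, PiLp.inner_apply,
    RCLike.inner_apply, Real.ringHom_apply, Fin.sum_univ_four, Imap, Jmap, Kmap,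
    cons_val_zero, cons_val_one, cons_val]
  ring

theorem norm_sq_mul_inner_Kmap_eq :
    ‖u‖ ^ 2 * ⟪V, Kmap w⟫ = ⟪u, w⟫ * ⟪V, Kmap u⟫ + ⟪Imap u, w⟫ * ⟪V, Jmap u⟫ -
      ⟪Jmap u, w⟫ * ⟪V, Imap u⟫ - ⟪Kmap u, w⟫ * ⟪V, u⟫ := by
  simp only [EuclideanSpace.norm_sq_eq, Real.norm_eq_abs, sq_abs, PiLp.inner_apply,
    RCLike.inner_apply, Real.ringHom_apply, Fin.sum_univ_four, Imap, Jmap, Kmap,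
    cons_val_zero, cons_val_one, cons_val]
  ring

theorem norm_sq_mul_norm_sq_eq :
    ‖u‖ ^ 2 * ‖w‖ ^ 2 = ⟪u, w⟫ ^ 2 + ⟪Imap u, w⟫ ^ 2 + ⟪Jmap u, w⟫ ^ 2 + ⟪Kmap u, w⟫ ^ 2 := by
  rw [← real_inner_self_eq_norm_sq w, norm_sq_mul_inner_eq u w w]
  simp only [real_inner_comm w]
  ring

end QuaternionFrame

theorem sq_add_sq_pos_of_ne_zero {v : Fin 2 → ℝ} (hv : v ≠ 0) : 0 < v 0 ^ 2 + v 1 ^ 2 := by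
  have := dotProduct_self_eq_zero.not.mpr hv
  simp only [dotProduct, Fin.sum_univ_two, ← sq] at this
  positivity

noncomputable def transitionMatrix (a₁ a₂ a₃ a₄ : ℝ) : Matrix (Fin 2) (Fin 2) ℝ :=
  (1 / a₂) • !![a₁ * a₂ - a₃ * a₄, -(a₂ ^ 2 + a₄ ^ 2); a₂ ^ 2 + a₃ ^ 2, a₁ * a₂ + a₃ * a₄]

section TransitionMatrix

variable {a₁ a₂ a₃ a₄ : ℝ}

theorem transitionMatrix_mulVec (x y : ℝ) :
    transitionMatrix a₁ a₂ a₃ a₄ *ᵥ ![x, y] =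
      ![((a₁ * a₂ - a₃ * a₄) * x - (a₂ ^ 2 + a₄ ^ 2) * y) / a₂,
        ((a₂ ^ 2 + a₃ ^ 2) * x + (a₁ * a₂ + a₃ * a₄) * y) / a₂] := by
  ext i
  fin_cases i <;>
  · simp only [transitionMatrix, smul_mulVec, mulVec_fin_two, Pi.smul_apply, smul_eq_mul, of_apply,
      cons_val', cons_val_zero, cons_val_one, cons_val_fin_one, Fin.zero_eta, Fin.mk_one]
    ring

theorem transitionMatrix_det (ha₂ : a₂ ≠ 0) :
    (transitionMatrix a₁ a₂ a₃ a₄).det = a₁ ^ 2 + a₂ ^ 2 + a₃ ^ 2 + a₄ ^ 2 := by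
  simp only [transitionMatrix, smul_of, smul_cons, smul_eq_mul, smul_empty, det_fin_two, of_apply,
    cons_val', cons_val_zero, cons_val_fin_one, cons_val_one]
  field_simp
  ring

theorem transitionMatrix_trace (ha₂ : a₂ ≠ 0) :
    (transitionMatrix a₁ a₂ a₃ a₄).trace = 2 * a₁ := by
  simp only [transitionMatrix, smul_of, smul_cons, smul_eq_mul, smul_empty, trace_fin_two, of_apply,
    cons_val', cons_val_zero, cons_val_fin_one, cons_val_one]
  field_simp
  ring

theorem abs_transitionMatrix_trace_lt_two (hS : a₁ ^ 2 + a₂ ^ 2 + a₃ ^ 2 + a₄ ^ 2 = 1)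
    (ha₂ : a₂ ≠ 0) : |(transitionMatrix a₁ a₂ a₃ a₄).trace| < 2 := by
  have ha₁ : a₁ ^ 2 < 1 := by linarith [sq_pos_of_ne_zero ha₂, sq_nonneg a₃, sq_nonneg a₄]
  rw [transitionMatrix_trace ha₂, abs_mul, abs_two]
  linarith [(sq_lt_one_iff_abs_lt_one a₁).mp ha₁]

theorem det_transitionMatrix_mulVec_cols (ha₂ : a₂ ≠ 0) (v : Fin 2 → ℝ) :
    !![v 0, (transitionMatrix a₁ a₂ a₃ a₄ *ᵥ v) 0;
      v 1, (transitionMatrix a₁ a₂ a₃ a₄ *ᵥ v) 1].det =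
      (a₂ ^ 2 * (v 0 ^ 2 + v 1 ^ 2) + (a₃ * v 0 + a₄ * v 1) ^ 2) / a₂ := by
  simp only [transitionMatrix, mulVec_fin_two, smul_of, smul_cons, smul_eq_mul, smul_empty,
    det_fin_two, of_apply, cons_val', cons_val_zero, cons_val_fin_one, cons_val_one]
  field_simp
  ring

theorem det_transitionMatrix_mulVec_cols_pos (ha₂ : 0 < a₂) {v : Fin 2 → ℝ} (hv : v ≠ 0) :
    0 < !![v 0, (transitionMatrix a₁ a₂ a₃ a₄ *ᵥ v) 0;
      v 1, (transitionMatrix a₁ a₂ a₃ a₄ *ᵥ v) 1].det := by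
  rw [det_transitionMatrix_mulVec_cols ha₂.ne']
  have := sq_add_sq_pos_of_ne_zero hv
  positivity

end TransitionMatrix

theorem inner_Jmap_Kmap_eq_transitionMatrix_mulVec {ν ν' V : EuclideanSpace ℝ (Fin 4)}
    (hν' : ‖ν'‖ = 1) (ha₂ : ⟪Imap ν', ν⟫ ≠ 0) (hVν : ⟪V, ν⟫ = 0) (hVν' : ⟪V, ν'⟫ = 0) :
    ![⟪V, Jmap ν⟫, ⟪V, Kmap ν⟫] =
      transitionMatrix ⟪ν', ν⟫ ⟪Imap ν', ν⟫ ⟪Jmap ν', ν⟫ ⟪Kmap ν', ν⟫ *ᵥ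
        ![⟪V, Jmap ν'⟫, ⟪V, Kmap ν'⟫] := by
  have h := norm_sq_mul_inner_eq ν' ν V
  have hJ := norm_sq_mul_inner_Jmap_eq ν' ν V
  have hK := norm_sq_mul_inner_Kmap_eq ν' ν V
  rw [hν', hVν, hVν'] at h
  rw [hν', hVν'] at hJ hK
  rw [transitionMatrix_mulVec]
  ext i
  fin_cases i <;>
    simp only [Fin.zero_eta, Fin.mk_one, cons_val_zero, cons_val_one, cons_val_fin_one] <;>
    field_simp
  · linear_combination ⟪Imap ν', ν⟫ * hJ - ⟪Kmap ν', ν⟫ * h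
  · linear_combination ⟪Imap ν', ν⟫ * hK + ⟪Jmap ν', ν⟫ * h

/-- Lemma 2.18: let `ν, ν' ∈ ℝ⁴` be unit vectors, set `a₁ = ⟪ν',ν⟫`,
`a₂ = ⟪iν',ν⟫`, `a₃ = ⟪jν',ν⟫`, `a₄ = ⟪kν',ν⟫` and suppose `a₂ > 0`.  Then the
transition matrix
`ψ = (1/a₂)·[[a₁a₂ − a₃a₄, −(a₂² + a₄²)], [a₂² + a₃², a₁a₂ + a₃a₄]]`
intertwines the two quaternionic trivializations on `(span{ν,ν'})^⊥`, has
determinant 1 and trace `2a₁ ∈ (−2, 2)`, and is positive elliptic. -/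
theorem transition_matrix_positive_elliptic
    (ν ν' : EuclideanSpace ℝ (Fin 4)) (hν : ‖ν‖ = 1) (hν' : ‖ν'‖ = 1)
    (a₁ a₂ a₃ a₄ : ℝ)
    (ha₁ : a₁ = ⟪ν', ν⟫) (ha₂ : a₂ = ⟪Imap ν', ν⟫)
    (ha₃ : a₃ = ⟪Jmap ν', ν⟫) (ha₄ : a₄ = ⟪Kmap ν', ν⟫)
    (ha₂pos : 0 < a₂)
    (ψ : Matrix (Fin 2) (Fin 2) ℝ)
    (hψ : ψ = (1 / a₂) •
      !![a₁ * a₂ - a₃ * a₄, -(a₂ ^ 2 + a₄ ^ 2); a₂ ^ 2 + a₃ ^ 2, a₁ * a₂ + a₃ * a₄]) :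
    (∀ V : EuclideanSpace ℝ (Fin 4), ⟪V, ν⟫ = 0 → ⟪V, ν'⟫ = 0 →
      ![⟪V, Jmap ν⟫, ⟪V, Kmap ν⟫] = ψ.mulVec ![⟪V, Jmap ν'⟫, ⟪V, Kmap ν'⟫]) ∧
    ψ.det = 1 ∧
    (ψ.trace = 2 * a₁ ∧ -2 < ψ.trace ∧ ψ.trace < 2) ∧
    (∀ v : Fin 2 → ℝ, v ≠ 0 →
      0 < (!![v 0, ψ.mulVec v 0; v 1, ψ.mulVec v 1] : Matrix (Fin 2) (Fin 2) ℝ).det) := by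
  obtain rfl : ψ = transitionMatrix a₁ a₂ a₃ a₄ := hψ
  subst ha₁ ha₂ ha₃ ha₄
  have hS : ⟪ν', ν⟫ ^ 2 + ⟪Imap ν', ν⟫ ^ 2 + ⟪Jmap ν', ν⟫ ^ 2 + ⟪Kmap ν', ν⟫ ^ 2 = 1 := by
    simpa [hν, hν'] using (norm_sq_mul_norm_sq_eq ν' ν).symm
  have ha₂ne := ha₂pos.ne'
  exact ⟨fun V hVν hVν' => inner_Jmap_Kmap_eq_transitionMatrix_mulVec hν' ha₂ne hVν hVν',
    (transitionMatrix_det ha₂ne).trans hS,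
    ⟨transitionMatrix_trace ha₂ne, abs_lt.mp (abs_transitionMatrix_trace_lt_two hS ha₂ne)⟩,
    fun v hv => det_transitionMatrix_mulVec_cols_pos ha₂pos hv⟩
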